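/- Let r ≥ 3 and let G be an n-vertex linear r-uniform hypergraph with minimum degree δ. Fix a vertex x and let L_i denote the set of vertices at distance i from x (in the linear-path metric). If d is an integer with 1 ≤ d ≤ δ/2 and for every i in [t] the inequality |L_{i−1}| + |L_i| + |L_{i+1}| ≥ (2δ/d)|L_i| holds, then for every i in [t] one has |L_i| > (δ/d)|L_{i−1}|. -/

import Mathlib

/-- A hypergraph (edge set) is linear if any two distinct edges share at most one vertex. -/
def HLinear {V : Type*} [DecidableEq V] (E : Finset (Finset V)) : Prop :=
  ∀ e ∈ E, ∀ f ∈ E, e ≠ f → (e ∩ f).card ≤ 1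

/-- Degree of a vertex in a hypergraph: number of edges containing it. -/
def hdeg {V : Type*} [DecidableEq V] (E : Finset (Finset V)) (v : V) : ℕ :=
  (E.filter (fun e => v ∈ e)).card

/-- A linear path of length `t`: consecutive edges share exactly one vertex,
non-consecutive edges are disjoint. -/
def IsLinearPath {V : Type*} [DecidableEq V] (E : Finset (Finset V)) (t : ℕ)
    (P : Fin t → Finset V) : Prop :=
  (∀ i, P i ∈ E) ∧
  (∀ i j : Fin t, (i : ℕ) + 1 = j → (P i ∩ P j).card = 1) ∧
  (∀ i j : Fin t, (i : ℕ) + 1 < j → P i ∩ P j = ∅)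

/-- A linear cycle of length `t ≥ 3`: cyclically consecutive edges share exactly one
vertex, all other pairs of edges are disjoint. -/
def IsLinearCycle {V : Type*} [DecidableEq V] (E : Finset (Finset V)) (t : ℕ)
    (C : Fin t → Finset V) : Prop :=
  3 ≤ t ∧ (∀ i, C i ∈ E) ∧
  (∀ i j : Fin t, ((i : ℕ) + 1) % t = j → (C i ∩ C j).card = 1) ∧
  (∀ i j : Fin t, i ≠ j → ((i : ℕ) + 1) % t ≠ j → ((j : ℕ) + 1) % t ≠ i →
    C i ∩ C j = ∅)

/-- Distance between two vertices of a linear hypergraph: the length of a shortest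
linear path whose first edge contains `x` and whose last edge contains `y`
(`⊤` if there is no such path, `0` iff `x = y`). -/
noncomputable def hdist {V : Type*} [DecidableEq V] (E : Finset (Finset V)) (x y : V) : ℕ∞ :=
  if x = y then 0 else
  sInf ((fun t : ℕ => (t : ℕ∞)) ''
    {t | ∃ (ht : 0 < t) (P : Fin t → Finset V), IsLinearPath E t P ∧
      x ∈ P ⟨0, ht⟩ ∧ y ∈ P ⟨t - 1, Nat.sub_lt ht Nat.one_pos⟩})

/-!
Write `D = δ / d ≥ 2` and `ℓᵢ = |Lᵢ|`. The neighbours of `x` lie in `L₁`, and by linearity the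
`δ` edges through `x` contribute disjoint sets of `r - 1 ≥ 2` neighbours, so
`ℓ₁ ≥ 2δ > D ℓ₀`. Inductively, if `D ℓᵢ₋₁ < ℓᵢ`, the expansion inequality gives
`ℓᵢ₊₁ ≥ (2D - 1) ℓᵢ - ℓᵢ₋₁ > (2D - 1 - 1/D) ℓᵢ ≥ D ℓᵢ`, since `D² - D - 1 ≥ 0` for `D ≥ 2`.
-/

open Finset

section Distance

variable {V : Type*} [DecidableEq V] (E : Finset (Finset V))

theorem one_le_hdist_of_ne {x y : V} (hxy : x ≠ y) : 1 ≤ hdist E x y := by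
  rw [hdist, if_neg hxy]
  refine le_sInf ?_
  rintro _ ⟨t, ⟨ht, -⟩, rfl⟩
  exact Nat.one_le_cast.mpr ht

theorem hdist_eq_zero_iff {x y : V} : hdist E x y = 0 ↔ x = y := by
  refine ⟨fun h => ?_, fun h => by simp [hdist, h]⟩
  by_contra hxy
  simpa [h] using one_le_hdist_of_ne E hxy

theorem hdist_eq_one_of_mem_edge {x y : V} {e : Finset V} (he : e ∈ E) (hx : x ∈ e)
    (hy : y ∈ e) (hxy : x ≠ y) : hdist E x y = 1 := by
  refine le_antisymm ?_ (one_le_hdist_of_ne E hxy)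
  rw [hdist, if_neg hxy]
  refine sInf_le ⟨1, ⟨Nat.one_pos, fun _ => e, ⟨fun _ => he, ?_, ?_⟩, hx, hy⟩, rfl⟩ <;>
    · intro i j hij
      omega

end Distance

section Neighbourhood

variable {V : Type*} [DecidableEq V] (E : Finset (Finset V))

def hnbhd (x : V) : Finset V :=
  (E.filter (x ∈ ·)).biUnion (·.erase x)

theorem hnbhd_subset_hdist_eq_one [Fintype V] (x : V) :
    hnbhd E x ⊆ univ.filter (fun v => hdist E x v = 1) := by
  intro y hy
  obtain ⟨e, he, hye⟩ := mem_biUnion.mp hy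
  rw [mem_filter] at he
  rw [mem_erase] at hye
  simpa using hdist_eq_one_of_mem_edge E he.1 he.2 hye.2 (Ne.symm hye.1)

theorem card_hnbhd {r : ℕ} (hcard : ∀ e ∈ E, e.card = r) (hlin : HLinear E) (x : V) :
    (hnbhd E x).card = hdeg E x * (r - 1) := by
  rw [hnbhd, card_biUnion, sum_congr rfl (g := fun _ => r - 1), sum_const, smul_eq_mul, hdeg]
  · intro e he
    rw [mem_filter] at he
    rw [card_erase_of_mem he.2, hcard e he.1]
  · intro e he f hf hef
    rw [mem_coe, mem_filter] at he hf
    rw [Function.onFun, disjoint_left]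
    intro a hae haf
    rw [mem_erase] at hae haf
    have hpair : ({x, a} : Finset V) ⊆ e ∩ f := by
      simp [insert_subset_iff, mem_inter, he.2, hf.2, hae.2, haf.2]
    have := (card_le_card hpair).trans (hlin e he.1 f hf.1 hef)
    rw [card_pair (Ne.symm hae.1)] at this
    omega

end Neighbourhood

section Expansion

variable {K : Type*} [Field K] [LinearOrder K] [IsStrictOrderedRing K]

theorem expansion_step {D a b c : K} (hD : 2 ≤ D) (ha : 0 ≤ a) (hab : D * a < b)
    (hexp : 2 * D * b ≤ a + b + c) : D * b < c := by
  have hb : 0 < b := lt_of_le_of_lt (by positivity) hab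
  nlinarith [mul_pos (by linarith : (0 : K) < D) hb, sq_nonneg (D - 2)]

theorem expansion_of_two_le {D : K} {ℓ : ℕ → K} {t : ℕ} (hD : 2 ≤ D) (hℓ : ∀ i, 0 ≤ ℓ i)
    (h₁ : D * ℓ 0 < ℓ 1)
    (hexp : ∀ i ∈ Icc 1 t, 2 * D * ℓ i ≤ ℓ (i - 1) + ℓ i + ℓ (i + 1)) :
    ∀ i ∈ Icc 1 t, D * ℓ (i - 1) < ℓ i := by
  intro i hi
  obtain ⟨hi1, hit⟩ := mem_Icc.mp hi
  clear hi
  induction i, hi1 using Nat.le_induction with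
  | base => exact h₁
  | succ i hi ih =>
    exact expansion_step hD (hℓ _) (ih (by omega))
      (hexp i (mem_Icc.mpr ⟨hi, by omega⟩))

end Expansion

/-- the level-expansion claim from Lemma 3.2 of the paper. -/
theorem stmt10 {V : Type*} [Fintype V] [DecidableEq V] (r : ℕ) (hr : 3 ≤ r)
    (E : Finset (Finset V)) (hcard : ∀ e ∈ E, e.card = r) (hlin : HLinear E)
    (δ : ℕ) (hδ : ∀ v : V, δ ≤ hdeg E v)
    (x : V) (d t : ℕ) (hd1 : 1 ≤ d) (hd2 : (d : ℝ) ≤ (δ : ℝ) / 2)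
    (L : ℕ → Finset V)
    (hL : ∀ i, L i = Finset.univ.filter (fun v => hdist E x v = (i : ℕ∞)))
    (hexp : ∀ i ∈ Finset.Icc 1 t,
      (2 * (δ : ℝ) / d) * (L i).card ≤
        ((L (i - 1)).card : ℝ) + (L i).card + (L (i + 1)).card) :
    ∀ i ∈ Finset.Icc 1 t, ((δ : ℝ) / d) * (L (i - 1)).card < ((L i).card : ℝ) := by
  have hd : (1 : ℝ) ≤ d := by exact_mod_cast hd1
  have hL0 : L 0 = {x} := by
    ext v
    simp [hL, hdist_eq_zero_iff, eq_comm]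
  have hL1 : 2 * δ ≤ (L 1).card := calc
    2 * δ ≤ hdeg E x * (r - 1) := by nlinarith [hδ x, (by omega : 2 ≤ r - 1)]
    _ = (hnbhd E x).card := (card_hnbhd E hcard hlin x).symm
    _ ≤ (L 1).card := card_le_card (by simpa [hL] using hnbhd_subset_hdist_eq_one E x)
  refine expansion_of_two_le (ℓ := fun i => ((L i).card : ℝ)) ?_ (fun _ => by positivity) ?_
    (by simpa only [mul_div_assoc] using hexp)
  · rw [le_div_iff₀ (by linarith)]
    linarith
  · have hL1' : (2 * δ : ℝ) ≤ (L 1).card := by exact_mod_cast hL1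
    have : (δ : ℝ) / d ≤ δ := div_le_self (by positivity) hd
    simp only [hL0, card_singleton, Nat.cast_one, mul_one]
    linarith
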